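/- arXiv:2505.08169 — 3 statements merged into one kernel-verified Lean document; each statement's English description precedes it below -/
import Mathlib

section
/- Let B ⊂ R^n (n ≥ 2) be the closed unit ball centered at the origin O, and let E2 = λB with λ = √2. Then for every x on the sphere of radius √2, the intersection S(B,x) ∩ S(B,−x) of the support cones of B with apexes x and −x equals the intersection of the sphere of radius √2 with the hyperplane x^⊥ through O orthogonal to x. -/
open Set Metric Function Bornology
open scoped RealInnerProductSpace Pointwise

noncomputable section

/-- The cone generated by `K` with apex `x`: `{x + t • (w - x) : w ∈ K, t ≥ 0}`. -/
def cone {n : ℕ} (K : Set (EuclideanSpace ℝ (Fin n))) (x : EuclideanSpace ℝ (Fin n)) :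
    Set (EuclideanSpace ℝ (Fin n)) :=
  {p | ∃ w ∈ K, ∃ t : ℝ, 0 ≤ t ∧ p = x + t • (w - x)}

/-- The support cone `S(K,x)`: the boundary of the cone generated by `K` with apex `x`. -/
def supportCone {n : ℕ} (K : Set (EuclideanSpace ℝ (Fin n))) (x : EuclideanSpace ℝ (Fin n)) :
    Set (EuclideanSpace ℝ (Fin n)) :=
  frontier (cone K x)

/-- A convex body: compact, convex, with nonempty interior. -/
def IsConvexBody {n : ℕ} (K : Set (EuclideanSpace ℝ (Fin n))) : Prop :=
  IsCompact K ∧ Convex ℝ K ∧ (interior K).Nonempty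

/-- An ellipsoid: a nondegenerate affine image of the closed unit ball. -/
def IsEllipsoid {n : ℕ} (K : Set (EuclideanSpace ℝ (Fin n))) : Prop :=
  ∃ f : EuclideanSpace ℝ (Fin n) ≃ᵃ[ℝ] EuclideanSpace ℝ (Fin n), K = f '' closedBall 0 1

/-- `K` has the strong intersection property relative to `O` and `S` with associated body `G`. -/
def StrongIntersectionProperty {n : ℕ} (O : EuclideanSpace ℝ (Fin n))
    (K S G : Set (EuclideanSpace ℝ (Fin n))) : Prop :=
  ∀ x ∈ frontier S, ∃ y ∈ frontier S, x ≠ y ∧ Collinear ℝ {x, O, y} ∧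
    ∃ u : EuclideanSpace ℝ (Fin n), u ≠ 0 ∧
      supportCone K x ∩ supportCone K y = {p | ⟪u, p - O⟫ = 0} ∩ G

/-!
Seen from an apex `x` with `‖x‖ > 1`, the unit ball subtends the half-angle `α` with
`sin α = 1 / ‖x‖`, so its cone is `{p | √(‖x‖ ^ 2 - 1) * ‖p - x‖ ≤ ⟪-x, p - x⟫}` and the support cone
is where equality holds. For `‖x‖ = √2` the cones from `x` and `-x` are right-angled; squaring the
two equalities and subtracting forces `⟪x, p⟫ = 0`, and then `‖p‖ ^ 2 = 2`.
-/

open Topology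

section InnerProductSpace

variable {E : Type*} [NormedAddCommGroup E] [InnerProductSpace ℝ E]

/-- Moving from a boundary point against the axis `u` leaves the set: the inner product drops at
rate `‖u‖ ^ 2`, while `c * ‖· - a‖` drops at rate at most `c * ‖u‖`. -/
theorem frontier_setOf_mul_norm_sub_le_inner {a u : E} {c : ℝ} (hc₀ : 0 ≤ c) (hc : c < ‖u‖) :
    frontier {p | c * ‖p - a‖ ≤ ⟪u, p - a⟫} = {p | c * ‖p - a‖ = ⟪u, p - a⟫} := by
  refine (frontier_le_subset_eq (by fun_prop) (by fun_prop)).antisymm fun p hp => ?_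
  rw [frontier_eq_closure_inter_closure]
  refine ⟨subset_closure hp.le, mem_closure_of_tendsto (b := 𝓝[>] (0 : ℝ))
    (f := fun t => p - t • u) ?_ ?_⟩
  · exact ((continuous_const.sub (continuous_id.smul continuous_const)).tendsto' 0 p
      (by simp)).mono_left nhdsWithin_le_nhds
  · filter_upwards [self_mem_nhdsWithin] with t (ht : 0 < t)
    have hsub : p - t • u - a = (p - a) - t • u := by abel
    have hnorm : ‖p - a‖ - t * ‖u‖ ≤ ‖p - t • u - a‖ := by
      simpa [hsub, norm_smul, abs_of_pos ht] using norm_sub_norm_le (p - a) (t • u)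
    have hinner : ⟪u, p - t • u - a⟫ = c * ‖p - a‖ - t * ‖u‖ ^ 2 := by
      rw [hsub, inner_sub_right, inner_smul_right, real_inner_self_eq_norm_sq, ← hp.out]
    simp only [mem_compl_iff, mem_ofPred_eq, not_le, hinner]
    nlinarith [mul_le_mul_of_nonneg_left hnorm hc₀,
      mul_lt_mul_of_pos_left hc (mul_pos ht (hc₀.trans_lt hc))]

theorem sqrt_mul_norm_sub_le_inner_neg_of_norm_le_one {x w : E} (hx : 1 ≤ ‖x‖) (hw : ‖w‖ ≤ 1) :
    √(‖x‖ ^ 2 - 1) * ‖w - x‖ ≤ ⟪-x, w - x⟫ := by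
  have hrhs : ⟪-x, w - x⟫ = ‖x‖ ^ 2 - ⟪x, w⟫ := by
    rw [inner_neg_left, inner_sub_right, real_inner_self_eq_norm_sq]; ring
  have hxw : ⟪x, w⟫ ≤ ‖x‖ :=
    (real_inner_le_norm x w).trans (mul_le_of_le_one_right (norm_nonneg x) hw)
  have hw2 : ‖w‖ ^ 2 ≤ 1 := pow_le_one₀ (norm_nonneg w) hw
  rw [hrhs, ← pow_le_pow_iff_left₀ (by positivity) (by nlinarith) two_ne_zero, mul_pow,
    Real.sq_sqrt (by nlinarith), norm_sub_sq_real, real_inner_comm]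
  -- the gap is `(‖x‖ ^ 2 - 1) * (1 - ‖w‖ ^ 2) + (⟪x, w⟫ - 1) ^ 2`
  nlinarith [mul_le_mul_of_nonneg_left hw2 (by nlinarith : (0 : ℝ) ≤ ‖x‖ ^ 2 - 1),
    sq_nonneg (⟪x, w⟫ - 1)]

end InnerProductSpace

theorem cone_closedBall_eq {n : ℕ} {x : EuclideanSpace ℝ (Fin n)} (hx : 1 < ‖x‖) :
    cone (closedBall 0 1) x = {p | √(‖x‖ ^ 2 - 1) * ‖p - x‖ ≤ ⟪-x, p - x⟫} := by
  ext p
  constructor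
  · rintro ⟨w, hw, t, ht, rfl⟩
    rw [mem_closedBall_zero_iff] at hw
    simp only [mem_ofPred_eq, add_sub_cancel_left, norm_smul, inner_smul_right,
      Real.norm_of_nonneg ht, mul_left_comm _ t]
    exact mul_le_mul_of_nonneg_left (sqrt_mul_norm_sub_le_inner_neg_of_norm_le_one hx.le hw) ht
  · intro hp
    rcases eq_or_ne p x with rfl | hpx
    · exact ⟨(0 : EuclideanSpace ℝ (Fin n)), by simp, 0, le_rfl, by simp⟩
    set q := p - x with hq_def
    set σ := ⟪-x, q⟫ with hσ_def
    have hq : 0 < ‖q‖ := norm_pos_iff.2 (sub_ne_zero.2 hpx)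
    have hσ : 0 < σ := (mul_pos (Real.sqrt_pos.2 (by nlinarith)) hq).trans_le hp
    -- `w` is the foot of the perpendicular from the centre to the line through `x` and `p`
    refine ⟨x + (σ / ‖q‖ ^ 2) • q, ?_, ‖q‖ ^ 2 / σ, by positivity, ?_⟩
    · have hσ_sq : (‖x‖ ^ 2 - 1) * ‖q‖ ^ 2 ≤ σ ^ 2 := by
        have := pow_le_pow_left₀ (by positivity : 0 ≤ √(‖x‖ ^ 2 - 1) * ‖q‖) hp 2
        rwa [mul_pow, Real.sq_sqrt (by nlinarith)] at this
      have hw_sq : ‖x + (σ / ‖q‖ ^ 2) • q‖ ^ 2 = ‖x‖ ^ 2 - σ ^ 2 / ‖q‖ ^ 2 := by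
        rw [norm_add_sq_real, inner_smul_right, norm_smul, Real.norm_of_nonneg (by positivity),
          show ⟪x, q⟫ = -σ by rw [hσ_def, inner_neg_left, neg_neg]]
        field_simp
        ring
      rw [mem_closedBall_zero_iff, ← pow_le_one_iff_of_nonneg (norm_nonneg _) two_ne_zero, hw_sq,
        sub_le_iff_le_add, ← sub_le_iff_le_add', le_div_iff₀ (by positivity)]
      exact hσ_sq
    · have hk : ‖q‖ ^ 2 / σ * (σ / ‖q‖ ^ 2) = 1 := by field_simp
      rw [add_sub_cancel_left, smul_smul, hk, one_smul, hq_def, add_sub_cancel]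

theorem supportCone_closedBall_eq {n : ℕ} {x : EuclideanSpace ℝ (Fin n)} (hx : 1 < ‖x‖) :
    supportCone (closedBall 0 1) x = {p | √(‖x‖ ^ 2 - 1) * ‖p - x‖ = ⟪-x, p - x⟫} := by
  rw [supportCone, cone_closedBall_eq hx]
  refine frontier_setOf_mul_norm_sub_le_inner (Real.sqrt_nonneg _) ?_
  rw [norm_neg, Real.sqrt_lt' (by linarith)]
  linarith

theorem stmt3_general {n : ℕ} (x : EuclideanSpace ℝ (Fin n))
    (hx : ‖x‖ = Real.sqrt 2) :
    supportCone (closedBall (0 : EuclideanSpace ℝ (Fin n)) 1) x ∩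
        supportCone (closedBall (0 : EuclideanSpace ℝ (Fin n)) 1) (-x)
      = sphere (0 : EuclideanSpace ℝ (Fin n)) (Real.sqrt 2) ∩ {p | ⟪x, p⟫ = 0} := by
  have hx2 : ‖x‖ ^ 2 = 2 := by rw [hx, Real.sq_sqrt zero_le_two]
  have hx1 : 1 < ‖x‖ := by nlinarith [norm_nonneg x]
  rw [supportCone_closedBall_eq hx1, supportCone_closedBall_eq (by rwa [norm_neg]), norm_neg, hx2]
  ext p
  simp only [show (2 : ℝ) - 1 = 1 by norm_num, Real.sqrt_one, one_mul, sub_neg_eq_add, neg_neg,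
    mem_inter_iff, mem_ofPred_eq, mem_sphere_zero_iff_norm, inner_neg_left, inner_sub_right,
    inner_add_right, real_inner_self_eq_norm_sq, hx2]
  have hp_sq : ‖p‖ = √2 ↔ ‖p‖ ^ 2 = 2 := by
    rw [← Real.sq_sqrt zero_le_two, sq_eq_sq₀ (norm_nonneg p) (Real.sqrt_nonneg 2),
      Real.sq_sqrt zero_le_two]
  rw [hp_sq]
  constructor
  · rintro ⟨h_minus, h_plus⟩
    have h₁ := congrArg (· ^ 2) h_minus
    have h₂ := congrArg (· ^ 2) h_plus
    simp only [norm_sub_sq_real, norm_add_sq_real, real_inner_comm x p, hx2] at h₁ h₂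
    have hxp : ⟪x, p⟫ = 0 := by nlinarith
    exact ⟨by nlinarith, hxp⟩
  · rintro ⟨hp, hxp⟩
    rw [hxp, ← sq_eq_sq₀ (norm_nonneg _) (by norm_num), ← sq_eq_sq₀ (norm_nonneg _) (by norm_num),
      norm_sub_sq_real, norm_add_sq_real, real_inner_comm x p, hxp, hp, hx2]
    norm_num

/-- For the unit ball `B` and an apex `x` with `‖x‖ = √2`, the intersection of the
support cones from `x` and `-x` is exactly the central section of the sphere of
radius `√2` by the hyperplane orthogonal to `x`. -/
theorem stmt3 {n : ℕ} (hn : 2 ≤ n) (x : EuclideanSpace ℝ (Fin n))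
    (hx : ‖x‖ = Real.sqrt 2) :
    supportCone (closedBall (0 : EuclideanSpace ℝ (Fin n)) 1) x ∩
        supportCone (closedBall (0 : EuclideanSpace ℝ (Fin n)) 1) (-x)
      = sphere (0 : EuclideanSpace ℝ (Fin n)) (Real.sqrt 2) ∩ {p | ⟪x, p⟫ = 0} :=
  stmt3_general x hx
end
end

section
/- Let B be the closed unit ball in R^n centered at O and let λ > √2. Then for every x with ‖x‖ = λ, the intersection S(B,x) ∩ S(B,−x) of the support cones with apexes x and −x is contained in the open ball of radius λ intersected with the hyperplane x^⊥; i.e., every point of S(B,x) ∩ S(B,−x) has norm strictly less than λ. -/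
open Set Metric Function Bornology
open scoped RealInnerProductSpace Pointwise

noncomputable section

/-!
The cone over the unit ball with apex `x`, `‖x‖ = λ ≥ 1`, is the circular cone
`{p | √(λ² - 1) ‖x - p‖ ≤ ⟪x, x - p⟫}` up to its boundary: every ray from `x` that meets the ball
satisfies this inequality, and every ray satisfying it strictly meets the ball at the foot of the
perpendicular from the origin. Hence `S(B, x)` lies on the equality surface. Squaring the equalities
for `x` and `-x` and subtracting gives `⟪x, p⟫ = 0`, and then `(λ² - 1) ‖p‖² = λ²`, so `‖p‖ < λ`
exactly when `λ² > 2`.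
-/

theorem frontier_subset_setOf_eq {X α : Type*} [TopologicalSpace X] [TopologicalSpace α]
    [LinearOrder α] [OrderClosedTopology α] {f g : X → α} (hf : Continuous f) (hg : Continuous g)
    {s : Set X} (hle : s ⊆ {x | f x ≤ g x}) (hlt : {x | f x < g x} ⊆ s) :
    frontier s ⊆ {x | f x = g x} := by
  intro x hx
  have hfg : f x ≤ g x := (isClosed_le hf hg).closure_subset_iff.2 hle hx.1
  have hnot : ¬ f x < g x := fun h => hx.2 (interior_maximal hlt (isOpen_lt hf hg) h)
  exact le_antisymm hfg (not_lt.1 hnot)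

section InnerProductSpace

variable {E : Type*} [NormedAddCommGroup E] [InnerProductSpace ℝ E]

theorem sqrt_norm_sq_sub_one_mul_norm_sub_le_inner {x w : E} (hx : 1 ≤ ‖x‖) (hw : ‖w‖ ≤ 1) :
    √(‖x‖ ^ 2 - 1) * ‖x - w‖ ≤ ⟪x, x - w⟫ := by
  have hinner : ⟪x, x - w⟫ = ‖x‖ ^ 2 - ⟪x, w⟫ := by
    rw [inner_sub_right, real_inner_self_eq_norm_sq]
  have hxw : ⟪x, w⟫ ≤ ‖x‖ :=
    (real_inner_le_norm x w).trans (mul_le_of_le_one_right (norm_nonneg x) hw)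
  have hnorm : ‖x - w‖ ^ 2 = ‖x‖ ^ 2 - 2 * ⟪x, w⟫ + ‖w‖ ^ 2 := norm_sub_sq_real x w
  have hsqrt : √(‖x‖ ^ 2 - 1) ^ 2 = ‖x‖ ^ 2 - 1 := Real.sq_sqrt (by nlinarith)
  rw [hinner]
  refine le_of_pow_le_pow_left₀ two_ne_zero (by nlinarith) ?_
  -- the difference of the squares is `(⟪x, w⟫ - 1)² + (‖x‖² - 1)(1 - ‖w‖²)`
  have hw2 : ‖w‖ ^ 2 ≤ 1 := pow_le_one₀ (norm_nonneg w) hw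
  have hx2 : 1 ≤ ‖x‖ ^ 2 := one_le_pow₀ hx
  rw [mul_pow, hsqrt, hnorm]
  nlinarith [sq_nonneg (⟪x, w⟫ - 1), mul_nonneg (sub_nonneg.2 hx2) (sub_nonneg.2 hw2)]

theorem norm_sub_inner_div_smul_lt_one {x v : E} (hv : √(‖x‖ ^ 2 - 1) * ‖v‖ < ⟪x, v⟫) :
    ‖x - (⟪x, v⟫ / ‖v‖ ^ 2) • v‖ < 1 := by
  have hv0 : v ≠ 0 := by
    rintro rfl
    simp at hv
  have hvpos : 0 < ‖v‖ ^ 2 := by positivity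
  have hfoot : ‖x - (⟪x, v⟫ / ‖v‖ ^ 2) • v‖ ^ 2 = ‖x‖ ^ 2 - ⟪x, v⟫ ^ 2 / ‖v‖ ^ 2 := by
    rw [norm_sub_sq_real, inner_smul_right, norm_smul, Real.norm_eq_abs, mul_pow, sq_abs]
    field_simp
    ring
  have hsq : (√(‖x‖ ^ 2 - 1) * ‖v‖) ^ 2 < ⟪x, v⟫ ^ 2 :=
    pow_lt_pow_left₀ hv (by positivity) two_ne_zero
  have hle : ‖x‖ ^ 2 - 1 ≤ √(‖x‖ ^ 2 - 1) ^ 2 := by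
    rw [Real.sq_sqrt']
    exact le_max_left _ _
  have hlt : ‖x‖ ^ 2 - 1 < ⟪x, v⟫ ^ 2 / ‖v‖ ^ 2 := by
    rw [lt_div_iff₀ hvpos]
    nlinarith
  rw [← pow_lt_pow_iff_left₀ (norm_nonneg _) zero_le_one two_ne_zero, hfoot]
  linarith

theorem inner_eq_zero_and_mul_norm_sq_eq {x p : E} {c : ℝ} (hc : c ^ 2 = ‖x‖ ^ 2 - 1)
    (hsub : c * ‖x - p‖ = ⟪x, x - p⟫) (hadd : c * ‖x + p‖ = ⟪x, x + p⟫) :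
    ⟪x, p⟫ = 0 ∧ (‖x‖ ^ 2 - 1) * ‖p‖ ^ 2 = ‖x‖ ^ 2 := by
  have hsub' : (‖x‖ ^ 2 - ⟪x, p⟫) ^ 2 = (‖x‖ ^ 2 - 1) * (‖x‖ ^ 2 - 2 * ⟪x, p⟫ + ‖p‖ ^ 2) := by
    rw [← hc, ← norm_sub_sq_real, ← mul_pow, hsub, inner_sub_right, real_inner_self_eq_norm_sq]
  have hadd' : (‖x‖ ^ 2 + ⟪x, p⟫) ^ 2 = (‖x‖ ^ 2 - 1) * (‖x‖ ^ 2 + 2 * ⟪x, p⟫ + ‖p‖ ^ 2) := by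
    rw [← hc, ← norm_add_sq_real, ← mul_pow, hadd, inner_add_right, real_inner_self_eq_norm_sq]
  have horth : ⟪x, p⟫ = 0 := by linear_combination (hadd' - hsub') / 4
  refine ⟨horth, ?_⟩
  rw [horth] at hadd'
  linear_combination -hadd'

end InnerProductSpace

section Cone

variable {n : ℕ}

theorem cone_closedBall_subset {x : EuclideanSpace ℝ (Fin n)} (hx : 1 ≤ ‖x‖) :
    cone (closedBall 0 1) x ⊆ {p | √(‖x‖ ^ 2 - 1) * ‖x - p‖ ≤ ⟪x, x - p⟫} := by
  rintro _ ⟨w, hw, t, ht, rfl⟩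
  have hle := sqrt_norm_sq_sub_one_mul_norm_sub_le_inner hx (mem_closedBall_zero_iff.1 hw)
  have hdiff : x - (x + t • (w - x)) = t • (x - w) := by
    rw [← neg_sub w x, smul_neg]
    abel
  rw [mem_ofPred_eq, hdiff, norm_smul, inner_smul_right, Real.norm_of_nonneg ht, mul_left_comm]
  exact mul_le_mul_of_nonneg_left hle ht

theorem subset_cone_closedBall (x : EuclideanSpace ℝ (Fin n)) :
    {p | √(‖x‖ ^ 2 - 1) * ‖x - p‖ < ⟪x, x - p⟫} ⊆ cone (closedBall 0 1) x := by
  intro p hp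
  rw [mem_ofPred_eq] at hp
  have hinner : 0 < ⟪x, x - p⟫ := lt_of_le_of_lt (by positivity) hp
  have hv : x - p ≠ 0 := by
    intro h
    simp [h] at hinner
  refine ⟨x - (⟪x, x - p⟫ / ‖x - p‖ ^ 2) • (x - p),
    mem_closedBall_zero_iff.2 (norm_sub_inner_div_smul_lt_one hp).le,
    ‖x - p‖ ^ 2 / ⟪x, x - p⟫, by positivity, ?_⟩
  have hcoeff : ‖x - p‖ ^ 2 / ⟪x, x - p⟫ * (⟪x, x - p⟫ / ‖x - p‖ ^ 2) = 1 := by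
    field_simp
  rw [sub_sub_cancel_left, smul_neg, smul_smul, hcoeff, one_smul]
  abel

theorem frontier_cone_closedBall_subset {x : EuclideanSpace ℝ (Fin n)} (hx : 1 ≤ ‖x‖) :
    frontier (cone (closedBall 0 1) x) ⊆ {p | √(‖x‖ ^ 2 - 1) * ‖x - p‖ = ⟪x, x - p⟫} :=
  frontier_subset_setOf_eq (by fun_prop) (by fun_prop) (cone_closedBall_subset hx)
    (subset_cone_closedBall x)

end Cone

/-- For the unit ball `B` and an apex `x` with `‖x‖ = λ > √2`, the intersection of the
support cones from `x` and `-x` lies in the open ball of radius `λ` intersected with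
the hyperplane orthogonal to `x`. -/
theorem stmt4 {n : ℕ} (lam : ℝ) (hlam : Real.sqrt 2 < lam)
    (x : EuclideanSpace ℝ (Fin n)) (hx : ‖x‖ = lam) :
    supportCone (closedBall (0 : EuclideanSpace ℝ (Fin n)) 1) x ∩
        supportCone (closedBall (0 : EuclideanSpace ℝ (Fin n)) 1) (-x)
      ⊆ ball (0 : EuclideanSpace ℝ (Fin n)) lam ∩ {p | ⟪x, p⟫ = 0} := by
  subst hx
  have hx2 : 2 < ‖x‖ ^ 2 := by
    nlinarith [Real.sq_sqrt (zero_le_two : (0 : ℝ) ≤ 2), Real.sqrt_nonneg 2]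
  have hx1 : 1 ≤ ‖x‖ := by nlinarith [norm_nonneg x]
  rintro p ⟨hp, hp'⟩
  have hsub := frontier_cone_closedBall_subset hx1 hp
  have hadd := frontier_cone_closedBall_subset (x := -x) (by rwa [norm_neg]) hp'
  rw [mem_ofPred_eq, norm_neg, ← neg_add', norm_neg, inner_neg_neg] at hadd
  obtain ⟨horth, hnorm⟩ := inner_eq_zero_and_mul_norm_sq_eq (Real.sq_sqrt (by linarith)) hsub hadd
  refine ⟨mem_ball_zero_iff.2 ?_, horth⟩
  have hsq : ‖p‖ ^ 2 < ‖x‖ ^ 2 := by nlinarith [sq_nonneg ‖p‖]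
  exact (pow_lt_pow_iff_left₀ (norm_nonneg p) (norm_nonneg x) two_ne_zero).1 hsq
end
end

section
/- Let K ⊂ R^n (n ≥ 2) be a convex body and O an interior point of K. If every chord of K through O is a diametral chord (i.e., K has parallel supporting hyperplanes at the two endpoints of each such chord), then K is centrally symmetric with center O. -/
/-!
Write `K = O + {g ≤ 1}` with `g` the gauge of `K - O`. The diametral chord through `O` in
direction `x` provides one vector `u` whose hyperplanes support `K` at both endpoints, so the
linear form `⟪u, ·⟫` is dominated by a multiple of `g` touching at `x` and by a multiple of
`g ∘ neg` touching at `x`, simultaneously. Along a great circle `θ ↦ cos θ • d + sin θ • e` this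
makes `log g` and `log (g ∘ neg)` semiconvex with the same subgradient at every `θ`, so their
difference is constant. Since `θ ↦ θ + π` swaps the two functions, `g (-d) = g d`.
-/

open Set Metric Function Bornology
open scoped RealInnerProductSpace Pointwise

noncomputable section

open Real Filter Topology

theorem Real.mul_sub_sq_le_log_cos_add_mul_sin {s h M : ℝ} (hs : |s| ≤ M)
    (hh : |h| ≤ 1 / (2 * (2 * M + 1))) :
    0 < cos h + s * sin h ∧ s * h - 3 * (2 * M + 1) ^ 2 * h ^ 2 ≤ log (cos h + s * sin h) := by
  have hM : 0 ≤ M := (abs_nonneg s).trans hs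
  have hh1 : |h| ≤ 1 / 2 := hh.trans (by gcongr; linarith)
  have hsq : h ^ 2 ≤ |h| := by rw [← sq_abs]; nlinarith [abs_nonneg h]
  set u := cos h + s * sin h - 1
  have hcos : |cos h - 1| ≤ h ^ 2 / 2 := by
    rw [abs_le]; constructor <;> nlinarith [one_sub_sq_div_two_le_cos (x := h), cos_le_one h]
  have hsin : |sin h - h| ≤ h ^ 2 := by
    rw [abs_sub_comm]
    refine (abs_sub_sin_le h).trans ?_
    rw [← sq_abs h]
    nlinarith [abs_nonneg h]
  have hlin : |u - s * h| ≤ (M + 1) * h ^ 2 := by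
    calc |u - s * h| = |(cos h - 1) + s * (sin h - h)| := by congr 1; simp only [u]; ring
      _ ≤ h ^ 2 / 2 + M * h ^ 2 := by
          refine (abs_add_le _ _).trans (add_le_add hcos ?_)
          rw [abs_mul]; exact mul_le_mul hs hsin (abs_nonneg _) hM
      _ ≤ (M + 1) * h ^ 2 := by nlinarith [sq_nonneg h]
  have hu : |u| ≤ (2 * M + 1) * |h| := by
    calc |u| ≤ |s * h| + |u - s * h| := by simpa using abs_add_le (s * h) (u - s * h)
      _ ≤ M * |h| + (M + 1) * |h| := by
          rw [abs_mul]
          exact add_le_add (mul_le_mul_of_nonneg_right hs (abs_nonneg h))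
            (hlin.trans (mul_le_mul_of_nonneg_left hsq (by linarith)))
      _ = (2 * M + 1) * |h| := by ring
  have hu2 : |u| ≤ 1 / 2 := by
    calc |u| ≤ (2 * M + 1) * (1 / (2 * (2 * M + 1))) := hu.trans (by gcongr)
      _ = 1 / 2 := by field_simp
  obtain ⟨hul, -⟩ := abs_le.mp hu2
  have ht : cos h + s * sin h = 1 + u := by ring
  rw [ht]
  refine ⟨by linarith, ?_⟩
  -- `log (1 + u) ≥ 1 - 1 / (1 + u) ≥ u - 2 u²` since `u ≥ -1/2`
  have hlog : u - 2 * u ^ 2 ≤ log (1 + u) := by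
    refine le_trans ?_ (one_sub_inv_le_log_of_pos (by linarith))
    rw [le_sub_iff_add_le, ← le_sub_iff_add_le', inv_le_iff_one_le_mul₀ (by linarith)]
    nlinarith [sq_nonneg u]
  have hu_sq : u ^ 2 ≤ (2 * M + 1) ^ 2 * h ^ 2 := by
    rw [← sq_abs u, ← sq_abs h, ← mul_pow]
    exact pow_le_pow_left₀ (abs_nonneg u) hu 2
  obtain ⟨hlin', -⟩ := abs_le.mp hlin
  nlinarith [mul_le_mul_of_nonneg_right (show M + 1 ≤ (2 * M + 1) ^ 2 by nlinarith) (sq_nonneg h)]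

theorem monotone_of_le_sub_of_bounded {G m : ℝ → ℝ} {M C δ : ℝ} (hδ : 0 < δ)
    (hm : ∀ θ, |m θ| ≤ M)
    (hG : ∀ θ h, 0 < h → h ≤ δ → (m θ - m (θ + h)) * h - C * h ^ 2 ≤ G (θ + h) - G θ) :
    Monotone G := by
  intro x y hxy
  rcases hxy.eq_or_lt with rfl | hlt
  · rfl
  -- Split `[x, y]` into `N` steps of length `h`; the `m`-terms telescope.
  have step : ∀ N : ℕ, 0 < N → (y - x) / N ≤ δ →
      -(2 * M + C * (y - x)) * ((y - x) / N) ≤ G y - G x := by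
    intro N hN hδN
    set h := (y - x) / N
    have hh : 0 < h := div_pos (sub_pos.2 hlt) (Nat.cast_pos.2 hN)
    have hNh : (N : ℝ) * h = y - x := mul_div_cancel₀ _ (Nat.cast_ne_zero.2 hN.ne')
    set P : ℕ → ℝ := fun i => x + i * h
    have hP : ∀ i, P (i + 1) = P i + h := fun i => by simp only [P]; push_cast; ring
    have hsum := Finset.sum_le_sum fun i (_ : i ∈ Finset.range N) =>
      (hP i ▸ hG (P i) h hh hδN : (m (P i) - m (P (i + 1))) * h - C * h ^ 2 ≤
        G (P (i + 1)) - G (P i))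
    have hG_tel := Finset.sum_range_sub (fun i => G (P i)) N
    have hm_tel := Finset.sum_range_sub' (fun i => m (P i)) N
    have hPN : P N = y := by simp only [P]; rw [hNh]; ring
    have hP0 : P 0 = x := by simp [P]
    simp only [hPN, hP0] at hG_tel hm_tel
    rw [hG_tel, Finset.sum_sub_distrib, ← Finset.sum_mul, hm_tel, Finset.sum_const,
      Finset.card_range, nsmul_eq_mul] at hsum
    have hmxy : -(2 * M) ≤ m x - m y := by
      have := abs_le.mp (hm x); have := abs_le.mp (hm y); linarith
    calc -(2 * M + C * (y - x)) * h = -(2 * M) * h - N * (C * h ^ 2) := by rw [← hNh]; ring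
      _ ≤ (m x - m y) * h - N * (C * h ^ 2) := by gcongr
      _ ≤ G y - G x := hsum
  have hlim : Tendsto (fun N : ℕ => -(2 * M + C * (y - x)) * ((y - x) / N)) atTop (𝓝 0) := by
    simpa using (tendsto_const_div_atTop_nhds_zero_nat (y - x)).const_mul (-(2 * M + C * (y - x)))
  refine sub_nonneg.1 (le_of_tendsto hlim ?_)
  have hsmall := (tendsto_const_div_atTop_nhds_zero_nat (y - x)).eventually (gt_mem_nhds hδ)
  filter_upwards [hsmall, eventually_gt_atTop 0] with N hN hN0 using step N hN0 hN.le

theorem sub_eq_sub_of_lower_support {L₁ L₂ s : ℝ → ℝ} {M C δ : ℝ} (hδ : 0 < δ)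
    (hs : ∀ θ, |s θ| ≤ M)
    (h₁ : ∀ θ h, |h| ≤ δ → L₁ θ + s θ * h - C * h ^ 2 ≤ L₁ (θ + h))
    (h₂ : ∀ θ h, |h| ≤ δ → L₂ θ + s θ * h - C * h ^ 2 ≤ L₂ (θ + h)) (x y : ℝ) :
    L₁ x - L₂ x = L₁ y - L₂ y := by
  have mono : ∀ L L' : ℝ → ℝ, (∀ θ h, |h| ≤ δ → L θ + s θ * h - C * h ^ 2 ≤ L (θ + h)) →
      (∀ θ h, |h| ≤ δ → L' θ + s θ * h - C * h ^ 2 ≤ L' (θ + h)) →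
      Monotone fun θ => L θ - L' θ := by
    intro L L' hL hL'
    refine monotone_of_le_sub_of_bounded (C := 2 * C) hδ hs fun θ h hh hhδ => ?_
    have h1 := hL θ h (by rwa [abs_of_pos hh])
    have h2 := hL' (θ + h) (-h) (by rwa [abs_neg, abs_of_pos hh])
    rw [add_neg_cancel_right] at h2
    nlinarith
  have h12 := mono L₁ L₂ h₁ h₂
  have h21 := mono L₂ L₁ h₂ h₁
  rcases le_total x y with hxy | hxy
  · linarith [h12 hxy, h21 hxy]
  · linarith [h12 hxy, h21 hxy]

def sinusoid (A B φ : ℝ) : ℝ := A * cos φ + B * sin φ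

theorem sinusoid_add (A B θ h : ℝ) :
    sinusoid A B (θ + h) = sinusoid A B θ * cos h + sinusoid A B (θ + π / 2) * sin h := by
  simp only [sinusoid, cos_add, sin_add, cos_pi_div_two, sin_pi_div_two]; ring

theorem sinusoid_sub_pi_div_two (A B θ : ℝ) :
    sinusoid A B (θ - π / 2) = -sinusoid A B (θ + π / 2) := by
  simp only [sinusoid, cos_sub_pi_div_two, sin_sub_pi_div_two, cos_add_pi_div_two,
    sin_add_pi_div_two]; ring

section TrigSupport

variable {f : ℝ → ℝ} {A B θ : ℝ}

theorem abs_sinusoid_add_pi_div_two_le {a b : ℝ} (ha : 0 < a)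
    (hf : ∀ φ, a ≤ f φ ∧ f φ ≤ b) (hθ : 0 < sinusoid A B θ)
    (hsupp : ∀ φ, sinusoid A B φ * f θ ≤ f φ * sinusoid A B θ) :
    |sinusoid A B (θ + π / 2)| ≤ b / a * sinusoid A B θ := by
  have hle : ∀ φ, sinusoid A B φ ≤ b / a * sinusoid A B θ := by
    intro φ
    rcases le_or_gt (sinusoid A B φ) 0 with hφ | hφ
    · exact hφ.trans (mul_nonneg (div_nonneg (ha.le.trans ((hf θ).1.trans (hf θ).2)) ha.le) hθ.le)
    rw [div_mul_eq_mul_div, le_div_iff₀ ha]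
    calc sinusoid A B φ * a ≤ sinusoid A B φ * f θ := by gcongr; exact (hf θ).1
      _ ≤ f φ * sinusoid A B θ := hsupp φ
      _ ≤ b * sinusoid A B θ := by gcongr; exact (hf φ).2
  refine abs_le.2 ⟨?_, hle _⟩
  linarith [hle (θ - π / 2), sinusoid_sub_pi_div_two A B θ]

theorem mul_cos_add_mul_sin_le (hθ : 0 < sinusoid A B θ)
    (hsupp : ∀ φ, sinusoid A B φ * f θ ≤ f φ * sinusoid A B θ) (h : ℝ) :
    f θ * (cos h + sinusoid A B (θ + π / 2) / sinusoid A B θ * sin h) ≤ f (θ + h) := by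
  refine le_of_mul_le_mul_right ?_ hθ
  calc f θ * (cos h + sinusoid A B (θ + π / 2) / sinusoid A B θ * sin h) * sinusoid A B θ
      = sinusoid A B (θ + h) * f θ := by rw [sinusoid_add A B θ h]; field_simp
    _ ≤ f (θ + h) * sinusoid A B θ := hsupp (θ + h)

end TrigSupport

theorem log_sub_log_eq_of_sinusoid_support {f₁ f₂ : ℝ → ℝ} {a b : ℝ} (ha : 0 < a)
    (hf₁ : ∀ φ, a ≤ f₁ φ ∧ f₁ φ ≤ b) (hf₂ : ∀ φ, 0 < f₂ φ)
    (hsupp : ∀ θ, ∃ A B, 0 < sinusoid A B θ ∧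
      ∀ φ, sinusoid A B φ * f₁ θ ≤ f₁ φ * sinusoid A B θ ∧
        sinusoid A B φ * f₂ θ ≤ f₂ φ * sinusoid A B θ) (x y : ℝ) :
    log (f₁ x) - log (f₂ x) = log (f₁ y) - log (f₂ y) := by
  choose A B hpos hsupp using hsupp
  set M := b / a
  have hM : 0 ≤ M := div_nonneg (ha.le.trans ((hf₁ 0).1.trans (hf₁ 0).2)) ha.le
  -- the common slope at `θ`: `sinusoid (θ + h) = sinusoid θ * (cos h + s θ * sin h)`
  set s := fun θ => sinusoid (A θ) (B θ) (θ + π / 2) / sinusoid (A θ) (B θ) θ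
  have hs : ∀ θ, |s θ| ≤ M := fun θ => by
    rw [abs_div, abs_of_pos (hpos θ), div_le_iff₀ (hpos θ)]
    exact abs_sinusoid_add_pi_div_two_le ha hf₁ (hpos θ) fun φ => (hsupp θ φ).1
  have support : ∀ f : ℝ → ℝ, (∀ φ, 0 < f φ) →
      (∀ θ h, f θ * (cos h + s θ * sin h) ≤ f (θ + h)) →
      ∀ θ h, |h| ≤ 1 / (2 * (2 * M + 1)) →
        log (f θ) + s θ * h - 3 * (2 * M + 1) ^ 2 * h ^ 2 ≤ log (f (θ + h)) := by
    intro f hf hmul θ h hh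
    obtain ⟨ht, hlog⟩ := mul_sub_sq_le_log_cos_add_mul_sin (hs θ) hh
    calc log (f θ) + s θ * h - 3 * (2 * M + 1) ^ 2 * h ^ 2
        ≤ log (f θ) + log (cos h + s θ * sin h) := by linarith
      _ = log (f θ * (cos h + s θ * sin h)) := (log_mul (hf θ).ne' ht.ne').symm
      _ ≤ log (f (θ + h)) := log_le_log (mul_pos (hf θ) ht) (hmul θ h)
  exact sub_eq_sub_of_lower_support (by positivity) hs
    (support f₁ (fun φ => ha.trans_le (hf₁ φ).1)
      fun θ => mul_cos_add_mul_sin_le (hpos θ) fun φ => (hsupp θ φ).1)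
    (support f₂ hf₂ fun θ => mul_cos_add_mul_sin_le (hpos θ) fun φ => (hsupp θ φ).2) x y

variable {E : Type*} [NormedAddCommGroup E] [InnerProductSpace ℝ E]

def greatCircle (d e : E) (θ : ℝ) : E := cos θ • d + sin θ • e

theorem inner_greatCircle (u d e : E) (θ : ℝ) :
    ⟪u, greatCircle d e θ⟫ = sinusoid ⟪u, d⟫ ⟪u, e⟫ θ := by
  simp only [greatCircle, sinusoid, inner_add_right, real_inner_smul_right]; ring

theorem norm_greatCircle {d e : E} (hd : ‖d‖ = 1) (he : ‖e‖ = 1) (hde : ⟪d, e⟫ = 0) (θ : ℝ) :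
    ‖greatCircle d e θ‖ = 1 := by
  have h := norm_add_sq_eq_norm_sq_add_norm_sq_real
    (by rw [real_inner_smul_left, real_inner_smul_right, hde]; ring :
      ⟪cos θ • d, sin θ • e⟫ = 0)
  rw [greatCircle, ← mul_self_inj (norm_nonneg _) zero_le_one, h]
  simp only [norm_smul, hd, he, mul_one, norm_eq_abs, abs_mul_abs_self]
  nlinarith [cos_sq_add_sin_sq θ]

theorem greatCircle_zero (d e : E) : greatCircle d e 0 = d := by simp [greatCircle]

theorem greatCircle_pi (d e : E) : greatCircle d e π = -d := by simp [greatCircle]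

theorem exists_norm_eq_one_inner_eq_zero [FiniteDimensional ℝ E] (hE : 2 ≤ Module.finrank ℝ E)
    (d : E) : ∃ e : E, ‖e‖ = 1 ∧ ⟪d, e⟫ = 0 := by
  have h := (ℝ ∙ d).finrank_add_finrank_orthogonal
  have h1 : Module.finrank ℝ (ℝ ∙ d) ≤ 1 := (finrank_span_le_card ({d} : Set E)).trans (by simp)
  obtain ⟨v, hv⟩ := Module.finrank_pos_iff_exists_ne_zero.1 (show 0 < Module.finrank ℝ (ℝ ∙ d)ᗮ by omega)
  refine ⟨‖(v : E)‖⁻¹ • (v : E), norm_smul_inv_norm (by simpa using hv), ?_⟩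
  rw [real_inner_smul_right, Submodule.mem_orthogonal_singleton_iff_inner_right.1 v.2, mul_zero]

/-- For positively homogeneous `g`, the hyperplane `⟪u, ·⟫ = ⟪u, x⟫ / g x` supports
`{g ≤ 1}` at `x / g x`. -/
def IsSupportNormal (g : E → ℝ) (u x : E) : Prop :=
  ∀ y, ⟪u, y⟫ * g x ≤ g y * ⟪u, x⟫

theorem IsSupportNormal.inner_pos {g : E → ℝ} {u x : E} (h : IsSupportNormal g u x)
    (hg : ∀ y, y ≠ 0 → 0 < g y) (hu : u ≠ 0) (hx : x ≠ 0) : 0 < ⟪u, x⟫ := by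
  have := h u
  rw [real_inner_self_eq_norm_sq] at this
  exact pos_of_mul_pos_right ((mul_pos (by positivity) (hg x hx)).trans_le this) (hg u hu).le

theorem mul_eq_mul_of_isSupportNormal {g₁ g₂ : E → ℝ} {a b : ℝ} (ha : 0 < a)
    (hg₁ : ∀ x, ‖x‖ = 1 → a ≤ g₁ x ∧ g₁ x ≤ b) (hg₂ : ∀ x, ‖x‖ = 1 → 0 < g₂ x)
    (hsupp : ∀ x, ‖x‖ = 1 → ∃ u, 0 < ⟪u, x⟫ ∧ IsSupportNormal g₁ u x ∧ IsSupportNormal g₂ u x)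
    {d e : E} (hd : ‖d‖ = 1) (he : ‖e‖ = 1) (hde : ⟪d, e⟫ = 0) :
    g₁ d * g₂ (-d) = g₁ (-d) * g₂ d := by
  have hD := norm_greatCircle hd he hde
  have key := log_sub_log_eq_of_sinusoid_support (f₁ := g₁ ∘ greatCircle d e)
    (f₂ := g₂ ∘ greatCircle d e) ha (fun φ => hg₁ _ (hD φ)) (fun φ => hg₂ _ (hD φ)) (fun θ => by
      obtain ⟨u, hpos, h₁, h₂⟩ := hsupp _ (hD θ)
      refine ⟨⟪u, d⟫, ⟪u, e⟫, by rwa [← inner_greatCircle], fun φ => ?_⟩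
      simp only [comp_apply, ← inner_greatCircle]
      exact ⟨h₁ _, h₂ _⟩) 0 π
  simp only [comp_apply, greatCircle_zero, greatCircle_pi] at key
  have hpos : ∀ x, ‖x‖ = 1 → 0 < g₁ x := fun x hx => ha.trans_le (hg₁ x hx).1
  have hd' : ‖-d‖ = 1 := by rwa [norm_neg]
  refine Real.log_injOn_pos (mul_pos (hpos d hd) (hg₂ _ hd')) (mul_pos (hpos _ hd') (hg₂ d hd)) ?_
  rw [log_mul (hpos d hd).ne' (hg₂ _ hd').ne', log_mul (hpos _ hd').ne' (hg₂ d hd).ne']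
  linarith

def ChordsDiametralAt (K : Set E) (O : E) : Prop :=
  ∀ p ∈ frontier K, ∀ q ∈ frontier K, p ≠ q → O ∈ segment ℝ p q →
    ∃ u : E, u ≠ 0 ∧ (∀ z ∈ K, ⟪u, z⟫ ≤ ⟪u, p⟫) ∧ (∀ z ∈ K, ⟪u, q⟫ ≤ ⟪u, z⟫)

theorem ChordsDiametralAt.preimage_add {K : Set E} {O : E} (h : ChordsDiametralAt K O) :
    ChordsDiametralAt ((O + ·) ⁻¹' K) 0 := by
  intro p hp q hq hpq h0
  have hfr : frontier ((O + ·) ⁻¹' K) = (O + ·) ⁻¹' frontier K :=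
    ((Homeomorph.addLeft O).preimage_frontier K).symm
  rw [hfr] at hp hq
  obtain ⟨u, hu, hmax, hmin⟩ := h _ hp _ hq (by simpa using hpq)
    (by simpa using (mem_segment_translate ℝ O).2 h0)
  exact ⟨u, hu, fun z hz => by simpa [inner_add_right] using hmax _ hz,
    fun z hz => by simpa [inner_add_right] using hmin _ hz⟩

section Gauge

variable {s : Set E}

theorem exists_bounds_gauge_of_norm_eq_one (hs₀ : s ∈ 𝓝 0) (hb : IsBounded s) :
    ∃ a b : ℝ, 0 < a ∧ ∀ x : E, ‖x‖ = 1 → a ≤ gauge s x ∧ gauge s x ≤ b := by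
  obtain ⟨r, hr, hball⟩ := Metric.mem_nhds_iff.1 hs₀
  obtain ⟨R, hR⟩ := hb.subset_closedBall 0
  refine ⟨1 / max R 1, 1 / r, by positivity, fun x hx => ⟨?_, ?_⟩⟩
  · simpa [hx] using le_gauge_of_subset_closedBall (absorbent_nhds_zero hs₀) (by positivity)
      (hR.trans (closedBall_subset_closedBall (le_max_left R 1))) (x := x)
  · rw [le_div_iff₀ hr, mul_comm, ← hx]
    exact mul_gauge_le_norm hball

theorem gauge_pos_of_isBounded (hs₀ : s ∈ 𝓝 0) (hb : IsBounded s) {x : E} (hx : x ≠ 0) :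
    0 < gauge s x :=
  (gauge_pos (absorbent_nhds_zero hs₀) ((NormedSpace.isVonNBounded_iff ℝ).2 hb)).2 hx

theorem gauge_inv_smul_self {x : E} (hx : gauge s x ≠ 0) : gauge s ((gauge s x)⁻¹ • x) = 1 := by
  rw [gauge_smul_of_nonneg (inv_nonneg.2 (gauge_nonneg _)), smul_eq_mul, inv_mul_cancel₀ hx]

theorem isSupportNormal_gauge (hc : Convex ℝ s) (hs₀ : s ∈ 𝓝 0) (hb : IsBounded s)
    (hcl : IsClosed s) {u x : E} (hx : x ≠ 0)
    (h : ∀ z ∈ s, ⟪u, z⟫ ≤ ⟪u, (gauge s x)⁻¹ • x⟫) : IsSupportNormal (gauge s) u x := by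
  have hpos : ∀ y : E, y ≠ 0 → 0 < gauge s y := fun _ => gauge_pos_of_isBounded hs₀ hb
  intro y
  rcases eq_or_ne y 0 with rfl | hy
  · simp
  have hmem : (gauge s y)⁻¹ • y ∈ s := hcl.closure_subset <|
    (gauge_le_one_iff_mem_closure hc hs₀).1 (gauge_inv_smul_self (hpos y hy).ne').le
  have := h _ hmem
  rw [real_inner_smul_right, real_inner_smul_right, inv_mul_le_iff₀ (hpos y hy), ← mul_assoc,
    ← div_eq_mul_inv, div_mul_eq_mul_div, le_div_iff₀ (hpos x hx)] at this
  linarith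

end Gauge

theorem ChordsDiametralAt.exists_isSupportNormal {s : Set E} (h : ChordsDiametralAt s 0)
    (hc : Convex ℝ s) (hs₀ : s ∈ 𝓝 0) (hs : IsCompact s) {x : E} (hx : x ≠ 0) :
    ∃ u, 0 < ⟪u, x⟫ ∧ IsSupportNormal (gauge s) u x ∧ IsSupportNormal (gauge (-s)) u x := by
  have hpos : ∀ y : E, y ≠ 0 → 0 < gauge s y := fun _ => gauge_pos_of_isBounded hs₀ hs.isBounded
  have hfr : ∀ y : E, y ≠ 0 → (gauge s y)⁻¹ • y ∈ frontier s := fun y hy =>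
    (gauge_eq_one_iff_mem_frontier hc hs₀).1 (gauge_inv_smul_self (hpos y hy).ne')
  have hx' : -x ≠ 0 := neg_ne_zero.2 hx
  set α := (gauge s x)⁻¹
  set β := (gauge s (-x))⁻¹
  have hα : 0 < α := inv_pos.2 (hpos x hx)
  have hβ : 0 < β := inv_pos.2 (hpos _ hx')
  have hpq : α • x ≠ β • -x := by
    rw [smul_neg, ne_eq, ← sub_eq_zero, sub_neg_eq_add, ← add_smul]
    exact smul_ne_zero (by positivity) hx
  have h0 : (0 : E) ∈ segment ℝ (α • x) (β • -x) :=
    ⟨β / (α + β), α / (α + β), by positivity, by positivity,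
      by rw [← add_div, add_comm, div_self (by positivity)], by
      rw [smul_smul, smul_smul, smul_neg, ← sub_eq_add_neg, ← sub_smul]; field_simp; simp⟩
  obtain ⟨u, hu, hmax, hmin⟩ := h _ (hfr x hx) _ (hfr _ hx') hpq h0
  have h₁ : IsSupportNormal (gauge s) u x :=
    isSupportNormal_gauge hc hs₀ hs.isBounded hs.isClosed hx hmax
  have h₂ : IsSupportNormal (gauge (-s)) u x := by
    refine isSupportNormal_gauge hc.neg (neg_mem_nhds_zero E hs₀) hs.isBounded.neg hs.isClosed.neg
      hx fun z hz => ?_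
    have := hmin _ hz
    rw [gauge_neg_set_eq_gauge_neg, inner_neg_right, smul_neg, inner_neg_right] at *
    linarith
  exact ⟨u, h₁.inner_pos hpos hu hx, h₁, h₂⟩

theorem ChordsDiametralAt.gauge_neg [FiniteDimensional ℝ E] (hE : 2 ≤ Module.finrank ℝ E)
    {s : Set E} (h : ChordsDiametralAt s 0) (hc : Convex ℝ s) (hs₀ : s ∈ 𝓝 0)
    (hs : IsCompact s) (x : E) : gauge s (-x) = gauge s x := by
  obtain ⟨a, b, ha, hab⟩ := exists_bounds_gauge_of_norm_eq_one hs₀ hs.isBounded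
  have hunit : ∀ d : E, ‖d‖ = 1 → gauge s (-d) = gauge s d := by
    intro d hd
    obtain ⟨e, he, hde⟩ := exists_norm_eq_one_inner_eq_zero hE d
    have key := mul_eq_mul_of_isSupportNormal ha hab
      (fun x hx => by
        rw [gauge_neg_set_eq_gauge_neg]; exact ha.trans_le (hab _ (by rwa [norm_neg])).1)
      (fun x hx => h.exists_isSupportNormal hc hs₀ hs (norm_ne_zero_iff.1 (hx ▸ one_ne_zero)))
      hd he hde
    rw [gauge_neg_set_eq_gauge_neg, gauge_neg_set_eq_gauge_neg, neg_neg] at key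
    exact ((mul_self_inj (gauge_nonneg _) (gauge_nonneg _)).1 key).symm
  rcases eq_or_ne x 0 with rfl | hx
  · rw [neg_zero]
  rw [← smul_inv_smul₀ (norm_ne_zero_iff.2 hx) x, ← smul_neg,
    gauge_smul_of_nonneg (norm_nonneg _), gauge_smul_of_nonneg (norm_nonneg _),
    hunit _ (by rw [norm_smul, norm_inv, norm_norm, inv_mul_cancel₀ (norm_ne_zero_iff.2 hx)])]

/-- Hammer's theorem: if every chord of a convex body `K` through an interior point `O`
is a diametral chord, then `K` is centrally symmetric with center `O`. -/
theorem stmt5 {n : ℕ} (hn : 2 ≤ n) (K : Set (EuclideanSpace ℝ (Fin n)))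
    (hK : IsConvexBody K) (O : EuclideanSpace ℝ (Fin n)) (hO : O ∈ interior K)
    (hchord : ∀ p ∈ frontier K, ∀ q ∈ frontier K, p ≠ q → O ∈ segment ℝ p q →
      ∃ u : EuclideanSpace ℝ (Fin n), u ≠ 0 ∧
        (∀ z ∈ K, ⟪u, z⟫ ≤ ⟪u, p⟫) ∧ (∀ z ∈ K, ⟪u, q⟫ ≤ ⟪u, z⟫)) :
    ∀ z, z ∈ K ↔ (2 : ℝ) • O - z ∈ K := by
  obtain ⟨hKc, hKconv, -⟩ := hK
  set s := (O + ·) ⁻¹' K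
  have hc : Convex ℝ s := hKconv.translate_preimage_right O
  have hs₀ : s ∈ 𝓝 0 := (continuous_const_add O).continuousAt.preimage_mem_nhds
    (by simpa using mem_interior_iff_mem_nhds.1 hO)
  have hs : IsCompact s := (Homeomorph.addLeft O).isCompact_preimage.2 hKc
  have hsymm := (ChordsDiametralAt.preimage_add hchord).gauge_neg
    (by rwa [finrank_euclideanSpace_fin]) hc hs₀ hs
  have hmem : ∀ x, x ∈ s ↔ gauge s x ≤ 1 := fun x => by
    rw [gauge_le_one_iff_mem_closure hc hs₀, hs.isClosed.closure_eq]
  intro z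
  calc z ∈ K ↔ z - O ∈ s := by simp [s]
    _ ↔ -(z - O) ∈ s := by rw [hmem, hmem, hsymm]
    _ ↔ (2 : ℝ) • O - z ∈ K := by simp only [s, mem_preimage]; rw [two_smul]; abel_nf
end
end
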